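/- Let f : G → G' be a group homomorphism between finite groups and ⇝ a G'-transfer system. Let f⁻¹_L(⇝) denote the transfer system generated by {(f⁻¹K', f⁻¹H') : K' ⇝ H'} and let f⁻¹_R(⇝) denote the largest transfer system contained in the partial order {(K,H) : K ⊆ H and f(K) ⇝ f(H)}. Then f⁻¹_L(⇝) refines f⁻¹_R(⇝), i.e., every relation in f⁻¹_L(⇝) is a relation in f⁻¹_R(⇝). -/
import Mathlib


/-- Conjugation of a subgroup: `gKg⁻¹`. -/
def conjSub {G : Type*} [Group G] (g : G) (K : Subgroup G) : Subgroup G :=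
  Subgroup.map (MulAut.conj g).toMonoidHom K

/-- A `G`-transfer system: a partial order on subgroups refining inclusion,
closed under conjugation and restriction. -/
def IsTransferSystem {G : Type*} [Group G] (R : Subgroup G → Subgroup G → Prop) : Prop :=
  (∀ H, R H H) ∧
  (∀ ⦃K H⦄, R K H → R H K → K = H) ∧
  (∀ ⦃K J H⦄, R K J → R J H → R K H) ∧
  (∀ ⦃K H⦄, R K H → K ≤ H) ∧
  (∀ ⦃K H⦄ (g : G), R K H → R (conjSub g K) (conjSub g H)) ∧
  (∀ ⦃K H⦄, R K H → ∀ ⦃L⦄, L ≤ H → R (L ⊓ K) L)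

/-- `TL` is the transfer system generated by the relation `R`:
the least transfer system containing `R`. -/
def IsGenBy {G : Type*} [Group G] (TL R : Subgroup G → Subgroup G → Prop) : Prop :=
  IsTransferSystem TL ∧ (∀ K H, R K H → TL K H) ∧
    ∀ T, IsTransferSystem T → (∀ K H, R K H → T K H) → ∀ K H, TL K H → T K H

/-- The largest transfer system contained in the partial order
`K ≤ H ∧ W (f K) (f H)`, for an inclusion-preserving map `F` on subgroups. -/
def invRgen {G G' : Type*} [Group G] [Group G'] (F : Subgroup G → Subgroup G')
    (W : Subgroup G' → Subgroup G' → Prop) (K H : Subgroup G) : Prop :=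
  K ≤ H ∧ ∀ (g : G) (L : Subgroup G), L ≤ conjSub g H →
    (conjSub g K ⊓ L ≤ L ∧ W (F (conjSub g K ⊓ L)) (F L))



lemma mem_conjSub {G : Type*} [Group G] {g x : G} {K : Subgroup G} :
    x ∈ conjSub g K ↔ g⁻¹ * x * g ∈ K := by
  simp only [conjSub, Subgroup.mem_map, MulEquiv.coe_toMonoidHom, MulAut.conj_apply]
  constructor
  · rintro ⟨y, hy, rfl⟩; group; simpa using hy
  · intro h; exact ⟨_, h, by group⟩

lemma conjSub_mono {G : Type*} [Group G] (g : G) {K H : Subgroup G} (h : K ≤ H) :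
    conjSub g K ≤ conjSub g H := Subgroup.map_mono h

lemma conjSub_conjSub {G : Type*} [Group G] (g a : G) (K : Subgroup G) :
    conjSub g (conjSub a K) = conjSub (g * a) K := by
  ext x; simp [mem_conjSub, mul_assoc]

lemma conjSub_inf {G : Type*} [Group G] (g : G) (K H : Subgroup G) :
    conjSub g (K ⊓ H) = conjSub g K ⊓ conjSub g H := by
  ext x; simp [mem_conjSub]

lemma conjSub_comap {G G' : Type*} [Group G] [Group G'] (f : G →* G') (g : G)
    (K : Subgroup G') : conjSub g (K.comap f) = (conjSub (f g) K).comap f := by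
  ext x; simp [mem_conjSub]

lemma map_comap_inf {G G' : Type*} [Group G] [Group G'] (f : G →* G')
    (X : Subgroup G') (L : Subgroup G) :
    Subgroup.map f (X.comap f ⊓ L) = X ⊓ Subgroup.map f L := by
  ext y; simp only [Subgroup.mem_map, Subgroup.mem_inf, Subgroup.mem_comap]
  constructor
  · rintro ⟨x, ⟨hx1, hx2⟩, rfl⟩; exact ⟨hx1, x, hx2, rfl⟩
  · rintro ⟨hy, x, hx, rfl⟩; exact ⟨x, ⟨hy, hx⟩, rfl⟩
section Aux
variable {G G' : Type*} [Group G] [Group G']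

lemma invRgen_isTransferSystem (f : G →* G') {W : Subgroup G' → Subgroup G' → Prop}
    (hW : IsTransferSystem W) : IsTransferSystem (invRgen (Subgroup.map f) W) := by
  obtain ⟨Wrefl, -, Wtrans, -, Wconj, Wres⟩ := hW
  refine ⟨?_, ?_, ?_, ?_, ?_, ?_⟩
  · intro H
    refine ⟨le_refl _, fun g L hL => ⟨inf_le_right, ?_⟩⟩
    rw [inf_eq_right.mpr hL]; exact Wrefl _
  · intro K H h1 h2; exact le_antisymm h1.1 h2.1
  · intro K J H hKJ hJH
    refine ⟨hKJ.1.trans hJH.1, fun g L hL => ⟨inf_le_right, ?_⟩⟩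
    have h1 := (hJH.2 g L hL).2
    have h2 := (hKJ.2 g (conjSub g J ⊓ L) inf_le_left).2
    have e : conjSub g K ⊓ (conjSub g J ⊓ L) = conjSub g K ⊓ L := by
      rw [← inf_assoc, inf_eq_left.mpr (conjSub_mono g hKJ.1)]
    rw [e] at h2
    exact Wtrans h2 h1
  · intro K H h; exact h.1
  · intro K H a h
    refine ⟨conjSub_mono a h.1, fun g L hL => ⟨inf_le_right, ?_⟩⟩
    rw [conjSub_conjSub] at hL ⊢
    exact (h.2 (g * a) L hL).2
  · intro K H h L hLH
    refine ⟨inf_le_left, fun g M hM => ⟨inf_le_right, ?_⟩⟩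
    have e : conjSub g (L ⊓ K) ⊓ M = conjSub g K ⊓ M := by
      rw [conjSub_inf, inf_comm (conjSub g L), inf_assoc,
        inf_eq_right.mpr hM]
    rw [e]
    exact (h.2 g M (hM.trans (conjSub_mono g hLH))).2

lemma invRgen_gen (f : G →* G') {W : Subgroup G' → Subgroup G' → Prop}
    (hW : IsTransferSystem W) :
    ∀ A B : Subgroup G, (∃ K' H' : Subgroup G', W K' H' ∧
      A = K'.comap f ∧ B = H'.comap f) → invRgen (Subgroup.map f) W A B := by
  obtain ⟨-, -, -, Wle, Wconj, Wres⟩ := hW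
  rintro A B ⟨K', H', hKH, rfl, rfl⟩
  refine ⟨Subgroup.comap_mono (Wle hKH), fun g L hL => ⟨inf_le_right, ?_⟩⟩
  rw [conjSub_comap] at hL ⊢
  rw [map_comap_inf, inf_comm]
  have hW' := Wconj (f g) hKH
  have hmapL : Subgroup.map f L ≤ conjSub (f g) H' :=
    (Subgroup.map_le_iff_le_comap).mpr hL
  exact Wres hW' hmapL

end Aux

theorem stmt10 {G G' : Type*} [Group G] [Group G'] [Finite G] [Finite G']
    (f : G →* G')
    (W : Subgroup G' → Subgroup G' → Prop) (hW : IsTransferSystem W)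
    (TL : Subgroup G → Subgroup G → Prop)
    (hTL : IsGenBy TL (fun A B => ∃ K' H' : Subgroup G', W K' H' ∧
      A = K'.comap f ∧ B = H'.comap f)) :
    ∀ K H, TL K H → invRgen (Subgroup.map f) W K H :=
  hTL.2.2 _ (invRgen_isTransferSystem f hW) (invRgen_gen f hW)
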